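/- Global complexity of the gradient method with spectral preconditioning: let f : E → ℝ be twice continuously differentiable with L-Lipschitz-continuous Hessian (L > 0) and bounded below by f* (f(x) ≥ f* for all x). Fix σ̄ ≥ 0 and a sequence of points (x_k)_{k≥0} such that for each k there is a symmetric positive semidefinite linear map H_k with ‖H_k − ∇²f(x_k)‖ ≤ σ̄, the step size is α_k = √(L‖∇f(x_k)‖/2) + σ̄, and the iterate satisfies ∇f(x_k) + (H_k + α_k I)(x_{k+1} − x_k) = 0. Then for every ε with 0 < ε < ‖∇f(x₀)‖, setting K = ⌈8(f(x₀) − f*)·(√(L/2)·ε^{−3/2} + σ̄·ε^{−2}) + 2·ln(‖∇f(x₀)‖/ε)⌉, it holds that min_{1 ≤ i ≤ K} ‖∇f(x_i)‖ ≤ ε. -/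

import Mathlib

open scoped RealInnerProductSpace
open Real Set

def IsSymmPSD {n : ℕ} (H : EuclideanSpace ℝ (Fin n) →L[ℝ] EuclideanSpace ℝ (Fin n)) : Prop :=
  (∀ u v, ⟪H u, v⟫ = ⟪u, H v⟫) ∧ ∀ u, 0 ≤ ⟪H u, u⟫

noncomputable def hess {n : ℕ} (f : EuclideanSpace ℝ (Fin n) → ℝ)
    (x : EuclideanSpace ℝ (Fin n)) :
    EuclideanSpace ℝ (Fin n) →L[ℝ] EuclideanSpace ℝ (Fin n) :=
  fderiv ℝ (gradient f) x

/-!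
Write `g_k = ‖∇f(x_k)‖`, `s_k = √(L g_k / 2)`, so `α_k = s_k + σ̄`, and `h = x_{k+1} - x_k`.
Testing the step equation against `h` and using `H_k ⪰ 0` gives `α_k ‖h‖ ≤ g_k`; the cubic
Taylor bound for a Lipschitz Hessian gives the decrease
`f(x_k) - f(x_{k+1}) ≥ (s_k + σ̄/2)‖h‖² - L‖h‖³/6` and the new gradient bound
`g_{k+1} ≤ (s_k + 2σ̄)‖h‖ + L‖h‖²/2`. Eliminating `‖h‖` (a polynomial inequality in the
scale-free quantities `α_k‖h‖/g_k` and `s_k‖h‖/g_k`) and using `1 - t ≤ -log t`, every step with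
`g_k ≥ ε` and `g_{k+1} > 0` satisfies
`1 ≤ 8 r(ε) (f(x_k) - f(x_{k+1})) + 2 (log g_k - log g_{k+1})`, where
`r(ε) = √(L/2) ε^{-3/2} + σ̄ ε^{-2}` is decreasing in `ε`. If all of `g_1, …, g_K` exceeded `ε`,
summing this over `k < K` would give `K < 8 r(ε)(f(x_0) - f*) + 2 log(g_0/ε) ≤ K`.
-/

theorem norm_sub_le_of_norm_deriv_le_mul_pow {E : Type*} [NormedAddCommGroup E]
    [NormedSpace ℝ E] {φ φ' : ℝ → E} {C : ℝ} (m : ℕ)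
    (hφ : ∀ t ∈ Icc (0 : ℝ) 1, HasDerivAt φ (φ' t) t)
    (hφ' : ∀ t ∈ Ico (0 : ℝ) 1, ‖φ' t‖ ≤ C * t ^ m) :
    ‖φ 1 - φ 0‖ ≤ C / (m + 1) := by
  have hB : ∀ t, HasDerivAt (fun t : ℝ => C / (m + 1) * t ^ (m + 1)) (C * t ^ m) t := fun t => by
    refine ((hasDerivAt_pow (m + 1) t).const_mul (C / (m + 1))).congr_deriv ?_
    push_cast
    field_simp
  simpa using image_norm_le_of_norm_deriv_right_le_deriv_boundary
    (f := fun t => φ t - φ 0) (a := 0) (b := 1)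
    (fun t ht => ((hφ t ht).sub_const (φ 0)).continuousAt.continuousWithinAt)
    (fun t ht => ((hφ t (Ico_subset_Icc_self ht)).sub_const (φ 0)).hasDerivWithinAt)
    (by simp) hB hφ' (right_mem_Icc.mpr zero_le_one)

theorem nat_le_sub_of_one_le_sub_succ {u : ℕ → ℝ} {K : ℕ}
    (hu : ∀ k < K, 1 ≤ u k - u (k + 1)) : (K : ℝ) ≤ u 0 - u K := by
  rw [← Finset.sum_range_sub']
  simpa using Finset.card_nsmul_le_sum (Finset.range K) _ 1 fun k hk =>
    hu k (Finset.mem_range.mp hk)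

section InnerProductSpace

variable {F : Type*} [NormedAddCommGroup F] [InnerProductSpace ℝ F]

theorem inner_le_inner_add_mul_norm_sq {A B : F →L[ℝ] F} {σ : ℝ} (hAB : ‖A - B‖ ≤ σ) (u : F) :
    ⟪A u, u⟫ ≤ ⟪B u, u⟫ + σ * ‖u‖ ^ 2 := by
  have hCS := real_inner_le_norm ((A - B) u) u
  have hop := (A - B).le_of_opNorm_le hAB u
  rw [sub_apply] at hCS hop
  rw [inner_sub_left] at hCS
  nlinarith [norm_nonneg u]

variable {g h : F} {H : F →L[ℝ] F} {α : ℝ}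

theorem inner_eq_of_add_apply_add_smul_eq_zero (hstep : g + H h + α • h = 0) :
    ⟪g, h⟫ = -⟪H h, h⟫ - α * ‖h‖ ^ 2 := by
  rw [eq_neg_of_add_eq_zero_left (a := g) (by rwa [add_assoc] at hstep), inner_neg_left,
    inner_add_left, real_inner_smul_left, real_inner_self_eq_norm_sq]
  ring

theorem mul_norm_le_norm_of_add_apply_add_smul_eq_zero (hH : 0 ≤ ⟪H h, h⟫)
    (hstep : g + H h + α • h = 0) : α * ‖h‖ ≤ ‖g‖ := by
  rcases (norm_nonneg h).eq_or_lt with h0 | hpos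
  · rw [← h0, mul_zero]
    exact norm_nonneg g
  · refine le_of_mul_le_mul_right ?_ hpos
    have hCS := neg_le_of_abs_le (abs_real_inner_le_norm g h)
    linarith [inner_eq_of_add_apply_add_smul_eq_zero hstep]

end InnerProductSpace

section Calculus

variable {n : ℕ} {f : EuclideanSpace ℝ (Fin n) → ℝ}

theorem contDiff_one_gradient (hf : ContDiff ℝ 2 f) : ContDiff ℝ 1 (gradient f) :=
  (InnerProductSpace.toDual ℝ _).symm.contDiff.comp (hf.fderiv_right (by norm_num))

theorem hasDerivAt_gradient_add_smul (hf : ContDiff ℝ 2 f) (x h : EuclideanSpace ℝ (Fin n))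
    (t : ℝ) : HasDerivAt (fun τ : ℝ => gradient f (x + τ • h)) (hess f (x + t • h) h) t := by
  have hline : HasDerivAt (fun τ : ℝ => x + τ • h) h t := by
    simpa using ((hasDerivAt_id t).smul_const h).const_add x
  exact (((contDiff_one_gradient hf).differentiable one_ne_zero) _).hasFDerivAt.comp_hasDerivAt
    t hline

theorem hasDerivAt_add_smul (hf : ContDiff ℝ 2 f) (x h : EuclideanSpace ℝ (Fin n)) (t : ℝ) :
    HasDerivAt (fun τ : ℝ => f (x + τ • h)) ⟪gradient f (x + t • h), h⟫ t := by
  have hline : HasDerivAt (fun τ : ℝ => x + τ • h) h t := by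
    simpa using ((hasDerivAt_id t).smul_const h).const_add x
  simpa [Function.comp_def] using
    ((hf.differentiable (by norm_num)) _).hasGradientAt.hasFDerivAt.comp_hasDerivAt t hline

variable {L : ℝ} {x : EuclideanSpace ℝ (Fin n)}

theorem norm_gradient_add_sub_sub_hess_le (hf : ContDiff ℝ 2 f)
    (hLip : ∀ y, ‖hess f y - hess f x‖ ≤ L * ‖y - x‖) (h : EuclideanSpace ℝ (Fin n)) :
    ‖gradient f (x + h) - gradient f x - hess f x h‖ ≤ L / 2 * ‖h‖ ^ 2 := by
  have hφ : ∀ t : ℝ, HasDerivAt (fun τ : ℝ => gradient f (x + τ • h) - τ • hess f x h)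
      (hess f (x + t • h) h - hess f x h) t := fun t => by
    refine ((hasDerivAt_gradient_add_smul hf x h t).sub
      ((hasDerivAt_id' t).smul_const (hess f x h))).congr_deriv ?_
    rw [one_smul]
  have hφ' : ∀ t ∈ Ico (0 : ℝ) 1,
      ‖hess f (x + t • h) h - hess f x h‖ ≤ L * ‖h‖ ^ 2 * t ^ 1 := fun t ht => by
    calc ‖hess f (x + t • h) h - hess f x h‖
        = ‖(hess f (x + t • h) - hess f x) h‖ := rfl
      _ ≤ L * ‖(x + t • h) - x‖ * ‖h‖ := ContinuousLinearMap.le_of_opNorm_le _ (hLip _) h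
      _ = L * ‖h‖ ^ 2 * t ^ 1 := by
        rw [add_sub_cancel_left, norm_smul, norm_of_nonneg ht.1]; ring
  have := norm_sub_le_of_norm_deriv_le_mul_pow 1 (fun t _ => hφ t) hφ'
  simp only [one_smul, zero_smul, add_zero, sub_zero, sub_right_comm _ (hess f x h)] at this
  norm_num at this
  linarith

theorem apply_add_le_taylor_cubic (hf : ContDiff ℝ 2 f)
    (hLip : ∀ y, ‖hess f y - hess f x‖ ≤ L * ‖y - x‖) (h : EuclideanSpace ℝ (Fin n)) :
    f (x + h) ≤ f x + ⟪gradient f x, h⟫ + 1 / 2 * ⟪hess f x h, h⟫ + L / 6 * ‖h‖ ^ 3 := by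
  have hφ : ∀ t : ℝ, HasDerivAt
      (fun τ : ℝ => f (x + τ • h) - τ * ⟪gradient f x, h⟫ - τ ^ 2 / 2 * ⟪hess f x h, h⟫)
      ⟪gradient f (x + t • h) - gradient f x - hess f x (t • h), h⟫ t := fun t => by
    have hquad := ((hasDerivAt_pow 2 t).div_const 2).mul_const ⟪hess f x h, h⟫
    refine (((hasDerivAt_add_smul hf x h t).sub ((hasDerivAt_id t).mul_const _)).sub
      hquad).congr_deriv ?_
    simp only [map_smul, inner_sub_left, real_inner_smul_left]
    norm_num
  have hφ' : ∀ t ∈ Ico (0 : ℝ) 1,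
      ‖⟪gradient f (x + t • h) - gradient f x - hess f x (t • h), h⟫‖
        ≤ L / 2 * ‖h‖ ^ 3 * t ^ 2 := fun t ht => by
    calc ‖⟪gradient f (x + t • h) - gradient f x - hess f x (t • h), h⟫‖
        ≤ ‖gradient f (x + t • h) - gradient f x - hess f x (t • h)‖ * ‖h‖ :=
          norm_inner_le_norm _ _
      _ ≤ L / 2 * ‖t • h‖ ^ 2 * ‖h‖ := by
          gcongr; exact norm_gradient_add_sub_sub_hess_le hf hLip _
      _ = L / 2 * ‖h‖ ^ 3 * t ^ 2 := by
          rw [norm_smul, norm_of_nonneg ht.1]; ring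
  have := norm_sub_le_of_norm_deriv_le_mul_pow 2 (fun t _ => hφ t) hφ'
  simp only [one_smul, zero_smul, add_zero, one_pow, zero_pow two_ne_zero, one_mul, zero_mul,
    sub_zero, norm_eq_abs, abs_le] at this
  linarith [this.2]

end Calculus

noncomputable def complexityRate (L σ ε : ℝ) : ℝ :=
  √(L / 2) / ε ^ ((3 : ℝ) / 2) + σ / ε ^ 2

theorem sqrt_add_div_sq_eq_complexityRate {L σ g : ℝ} (hg : 0 < g) :
    (√(L * g / 2) + σ) / g ^ 2 = complexityRate L σ g := by
  have hsqrt : √(L * g / 2) = √(L / 2) * √g := by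
    rw [← sqrt_mul' _ hg.le]; ring_nf
  have hpow : g ^ ((3 : ℝ) / 2) = g * √g := by
    rw [show (3 : ℝ) / 2 = 1 + 1 / 2 by norm_num, rpow_add hg, rpow_one, sqrt_eq_rpow]
  rw [complexityRate, hsqrt, hpow]
  field_simp
  linear_combination √(L / 2) * mul_self_sqrt hg.le

theorem complexityRate_le_of_le {L σ ε g : ℝ} (hσ : 0 ≤ σ) (hε : 0 < ε) (hεg : ε ≤ g) :
    complexityRate L σ g ≤ complexityRate L σ ε := by
  unfold complexityRate
  gcongr

theorem two_mul_div_sub_one_le_of_step_bounds {L σ g g' s r D : ℝ} (hg : 0 < g) (hs : 0 ≤ s)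
    (hσ : 0 ≤ σ) (hr : 0 ≤ r) (hLg : L * g = 2 * s ^ 2) (hrg : (s + σ) * r ≤ g)
    (hD : (s + σ / 2) * r ^ 2 - L / 6 * r ^ 3 ≤ D)
    (hg' : g' ≤ (s + 2 * σ) * r + L / 2 * r ^ 2) :
    2 * (g' / g) - 1 ≤ 8 * ((s + σ) / g ^ 2) * D := by
  -- in the scale-free variables `a = (s + σ) r / g ∈ [0, 1]` and `u = s r / g ≤ a`
  -- the claim becomes a polynomial inequality
  set a := (s + σ) * r / g with ha
  set u := s * r / g with hu
  have hu0 : 0 ≤ u := by positivity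
  have hua : u ≤ a := by
    show s * r / g ≤ (s + σ) * r / g
    gcongr
    linarith
  have ha1 : a ≤ 1 := (div_le_one hg).mpr hrg
  have hL : L = 2 * s ^ 2 / g := by field_simp; linarith
  have hgrad : 2 * (g' / g) - 1 ≤ 4 * a - 2 * u + 2 * u ^ 2 - 1 := by
    calc 2 * (g' / g) - 1 ≤ 2 * (((s + 2 * σ) * r + L / 2 * r ^ 2) / g) - 1 := by gcongr
      _ = 4 * a - 2 * u + 2 * u ^ 2 - 1 := by rw [ha, hu, hL]; field_simp; ring
  have hdecr : 4 * a * (a + u) - 8 / 3 * a * u ^ 2 ≤ 8 * ((s + σ) / g ^ 2) * D := by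
    calc 4 * a * (a + u) - 8 / 3 * a * u ^ 2
        = 8 * ((s + σ) / g ^ 2) * ((s + σ / 2) * r ^ 2 - L / 6 * r ^ 3) := by
          rw [ha, hu, hL]; field_simp; ring
      _ ≤ 8 * ((s + σ) / g ^ 2) * D := by gcongr
  have hpoly : 4 * a - 2 * u + 2 * u ^ 2 - 1 ≤ 4 * a * (a + u) - 8 / 3 * a * u ^ 2 := by
    nlinarith [sq_nonneg (2 * a - 1), mul_nonneg hu0 (sub_nonneg.mpr hua),
      mul_nonneg (mul_nonneg hu0 hu0) (sub_nonneg.mpr ha1)]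
  linarith

theorem one_le_complexityRate_mul_add_two_mul_log_sub {L σ ε g g' r D : ℝ} (hL : 0 ≤ L)
    (hσ : 0 ≤ σ) (hε : 0 < ε) (hεg : ε ≤ g) (hg' : 0 < g') (hr : 0 ≤ r)
    (hrg : (√(L * g / 2) + σ) * r ≤ g)
    (hD : (√(L * g / 2) + σ / 2) * r ^ 2 - L / 6 * r ^ 3 ≤ D)
    (hg'le : g' ≤ (√(L * g / 2) + 2 * σ) * r + L / 2 * r ^ 2) :
    1 ≤ 8 * complexityRate L σ ε * D + 2 * (log g - log g') := by
  have hg : 0 < g := hε.trans_le hεg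
  have hrate_g := sqrt_add_div_sq_eq_complexityRate (L := L) (σ := σ) hg
  set s := √(L * g / 2)
  have hs : 0 ≤ s := sqrt_nonneg _
  have hLg : L * g = 2 * s ^ 2 := by rw [sq_sqrt (by positivity)]; ring
  have hLr : L * r ≤ 2 * s := by
    refine le_of_mul_le_mul_right ?_ hg
    nlinarith [mul_nonneg hσ hr]
  have hD0 : 0 ≤ D := by
    nlinarith [mul_nonneg (sub_nonneg.mpr hLr) (sq_nonneg r), mul_nonneg hσ (sq_nonneg r),
      mul_nonneg hs (sq_nonneg r)]
  have hgrad := two_mul_div_sub_one_le_of_step_bounds hg hs hσ hr hLg hrg hD hg'le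
  rw [hrate_g] at hgrad
  have hlog : 1 - g' / g ≤ log g - log g' := by
    rw [← log_div hg.ne' hg'.ne', ← inv_div]
    exact one_sub_inv_le_log_of_pos (div_pos hg hg')
  have hrate := mul_le_mul_of_nonneg_right (complexityRate_le_of_le (L := L) hσ hε hεg) hD0
  linarith

section Step

variable {n : ℕ} {f : EuclideanSpace ℝ (Fin n) → ℝ} {L σ α : ℝ}
  {a b : EuclideanSpace ℝ (Fin n)} {Hk : EuclideanSpace ℝ (Fin n) →L[ℝ] EuclideanSpace ℝ (Fin n)}

theorem le_sub_apply_of_step (hf : ContDiff ℝ 2 f)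
    (hLip : ∀ y, ‖hess f y - hess f a‖ ≤ L * ‖y - a‖) (hHerr : ‖Hk - hess f a‖ ≤ σ)
    (hPSD : 0 ≤ ⟪Hk (b - a), b - a⟫)
    (hstep : gradient f a + Hk (b - a) + α • (b - a) = 0) :
    (α - σ / 2) * ‖b - a‖ ^ 2 - L / 6 * ‖b - a‖ ^ 3 ≤ f a - f b := by
  have htaylor := apply_add_le_taylor_cubic hf hLip (b - a)
  rw [add_sub_cancel] at htaylor
  have hhess := inner_le_inner_add_mul_norm_sq (norm_sub_rev Hk _ ▸ hHerr) (b - a)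
  linarith [inner_eq_of_add_apply_add_smul_eq_zero hstep]

theorem norm_gradient_le_of_step (hf : ContDiff ℝ 2 f)
    (hLip : ∀ y, ‖hess f y - hess f a‖ ≤ L * ‖y - a‖) (hHerr : ‖Hk - hess f a‖ ≤ σ)
    (hα : 0 ≤ α) (hstep : gradient f a + Hk (b - a) + α • (b - a) = 0) :
    ‖gradient f b‖ ≤ (α + σ) * ‖b - a‖ + L / 2 * ‖b - a‖ ^ 2 := by
  have hga : gradient f a = -(Hk (b - a) + α • (b - a)) :=
    eq_neg_of_add_eq_zero_left (by rwa [add_assoc] at hstep)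
  have hdecomp : gradient f b = (gradient f (a + (b - a)) - gradient f a - hess f a (b - a))
      + (hess f a - Hk) (b - a) - α • (b - a) := by
    rw [add_sub_cancel, sub_apply, hga]
    abel
  calc ‖gradient f b‖
      ≤ ‖gradient f (a + (b - a)) - gradient f a - hess f a (b - a)‖
        + ‖(hess f a - Hk) (b - a)‖ + ‖α • (b - a)‖ := by
        rw [hdecomp]
        exact (norm_sub_le _ _).trans (add_le_add_left (norm_add_le _ _) _)
    _ ≤ L / 2 * ‖b - a‖ ^ 2 + σ * ‖b - a‖ + α * ‖b - a‖ := by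
        rw [norm_smul, norm_of_nonneg hα]
        gcongr
        · exact norm_gradient_add_sub_sub_hess_le hf hLip _
        · exact (hess f a - Hk).le_of_opNorm_le (norm_sub_rev Hk _ ▸ hHerr) _
    _ = (α + σ) * ‖b - a‖ + L / 2 * ‖b - a‖ ^ 2 := by ring

theorem one_le_complexityRate_mul_sub_add_two_mul_log_sub_of_step (hf : ContDiff ℝ 2 f)
    (hL : 0 ≤ L) (hLip : ∀ y, ‖hess f y - hess f a‖ ≤ L * ‖y - a‖) (hσ : 0 ≤ σ)
    (hHerr : ‖Hk - hess f a‖ ≤ σ) (hPSD : 0 ≤ ⟪Hk (b - a), b - a⟫)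
    (hα : α = √(L * ‖gradient f a‖ / 2) + σ)
    (hstep : gradient f a + Hk (b - a) + α • (b - a) = 0) {ε : ℝ} (hε : 0 < ε)
    (hεa : ε ≤ ‖gradient f a‖) (hb : 0 < ‖gradient f b‖) :
    1 ≤ 8 * complexityRate L σ ε * (f a - f b)
      + 2 * (log ‖gradient f a‖ - log ‖gradient f b‖) := by
  have hα0 : 0 ≤ α := hα ▸ by positivity
  have hdecr := le_sub_apply_of_step hf hLip hHerr hPSD hstep
  have hgrad := norm_gradient_le_of_step hf hLip hHerr hα0 hstep
  subst hα
  exact one_le_complexityRate_mul_add_two_mul_log_sub hL hσ hε hεa hb (norm_nonneg _)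
    (mul_norm_le_norm_of_add_apply_add_smul_eq_zero hPSD hstep)
    (by linear_combination hdecr) (by linear_combination hgrad)

end Step

/-- Global complexity of the gradient method with spectral preconditioning:
with PSD preconditioners satisfying `‖H_k − ∇²f(x_k)‖ ≤ σ̄`, the step-size rule
`α_k = √(L‖∇f(x_k)‖/2) + σ̄`, and the iteration
`∇f(x_k) + (H_k + α_k I)(x_{k+1} − x_k) = 0`, after
`K = ⌈8(f(x₀) − f*)(√(L/2)/ε^{3/2} + σ̄/ε²) + 2 ln(‖∇f(x₀)‖/ε)⌉` steps
one of the iterates `x_1, …, x_K` has gradient norm at most `ε`. -/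
theorem spectral_preconditioning_global_complexity {n : ℕ}
    (f : EuclideanSpace ℝ (Fin n) → ℝ) (hf : ContDiff ℝ 2 f)
    (L : ℝ) (hL : 0 < L)
    (hLip : ∀ x y, ‖hess f x - hess f y‖ ≤ L * ‖x - y‖)
    (fstar : ℝ) (hbdd : ∀ z, fstar ≤ f z)
    (σbar : ℝ) (hσ : 0 ≤ σbar)
    (x : ℕ → EuclideanSpace ℝ (Fin n))
    (H : ℕ → EuclideanSpace ℝ (Fin n) →L[ℝ] EuclideanSpace ℝ (Fin n))
    (hH : ∀ k, IsSymmPSD (H k))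
    (hHerr : ∀ k, ‖H k - hess f (x k)‖ ≤ σbar)
    (α : ℕ → ℝ)
    (hα : ∀ k, α k = Real.sqrt (L * ‖gradient f (x k)‖ / 2) + σbar)
    (hstep : ∀ k, gradient f (x k) + (H k) (x (k + 1) - x k)
      + α k • (x (k + 1) - x k) = 0)
    (ε : ℝ) (hε : 0 < ε) (hε' : ε < ‖gradient f (x 0)‖)
    (K : ℕ)
    (hK : K = ⌈8 * (f (x 0) - fstar) *
        (Real.sqrt (L / 2) / ε ^ ((3 : ℝ) / 2) + σbar / ε ^ 2)
      + 2 * Real.log (‖gradient f (x 0)‖ / ε)⌉₊) :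
    ∃ i, 1 ≤ i ∧ i ≤ K ∧ ‖gradient f (x i)‖ ≤ ε := by
  by_contra! hcon
  have hgrad : ∀ i ≤ K, ε < ‖gradient f (x i)‖ := fun i hi => by
    rcases i with _ | i
    exacts [hε', hcon _ (by omega) hi]
  set c := complexityRate L σbar ε
  have hsum := nat_le_sub_of_one_le_sub_succ
    (u := fun k => 8 * c * f (x k) + 2 * log ‖gradient f (x k)‖) (K := K) fun k hk => by
      have := one_le_complexityRate_mul_sub_add_two_mul_log_sub_of_step hf hL.le
        (fun y => hLip y (x k)) hσ (hHerr k) ((hH k).2 _) (hα k) (hstep k) hε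
        (hgrad k hk.le).le (hε.trans (hgrad (k + 1) hk))
      linarith
  have hceil : 8 * (f (x 0) - fstar) * c + 2 * log (‖gradient f (x 0)‖ / ε) ≤ K :=
    hK ▸ Nat.le_ceil _
  rw [log_div (hε.trans hε').ne' hε.ne'] at hceil
  have hc : 0 ≤ c := by unfold c complexityRate; positivity
  have hfK := mul_le_mul_of_nonneg_left (hbdd (x K)) hc
  have hlogK := log_lt_log hε (hgrad K le_rfl)
  linarith
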